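/- Let (Z_n) be a discrete-time Markov chain on a measurable state space E∪{∂} with ∂∉E absorbing, let K⊆E be measurable, let θ₂∈(0,1) and let n ≥ 1 be such that θ₂^{-n}ℙ_z(Z_n∈K) ≥ 1 for all z∈K. Define φ₂(z) = (∑_{k=0}^{n-1}θ₂^{-k})^{-1} · ∑_{k=0}^{n-1} θ₂^{-k} ℙ_z(Z_k∈K) for z∈E. Then inf_{z∈K} φ₂(z) > 0, sup_{z∈E} φ₂(z) ≤ 1, and E_z(φ₂(Z_1)1_{Z_1≠∂}) ≥ θ₂ φ₂(z) for all z∈E. -/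

import Mathlib

open MeasureTheory Filter Topology ProbabilityTheory
open scoped ENNReal NNReal

namespace MChain

variable {α : Type*}

/-- Law of `Z_n` for the Markov chain with one-step transition kernel `step`, started at `x`. -/
noncomputable def lawn [MeasurableSpace α] (step : Kernel α α) : ℕ → α → Measure α
  | 0, x => Measure.dirac x
  | (n + 1), x => (lawn step n x).bind fun y => step y

/-- The exponential convergence parameter
`θ₀ = sup_{z ∈ E} sup {θ > 0 : liminf θ^{-n} ℙ_z(Z_n ≠ ∂) > 0}`. -/
noncomputable def theta0 [MeasurableSpace α] (step : Kernel α α) (dead : α) : ℝ :=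
  sSup {θ : ℝ | 0 < θ ∧ ∃ z : α, z ≠ dead ∧
    0 < atTop.liminf fun n : ℕ => (lawn step n z {x | x ≠ dead}).toReal / θ ^ n}

/-! On `K` the `k = 0` term of `φ₂` equals `1`, and `φ₂ ≤ 1` because it averages
probabilities. By the Markov property, `E_z φ₂(Z₁)` is the same weighted average of the
`ℙ_z(Z_{k+1} ∈ K)`; after multiplying `φ₂(z)` by `θ₂` the two sums agree term by term except
for `θ₂ ℙ_z(Z₀ ∈ K)` against `θ₂^{1-n} ℙ_z(Z_n ∈ K)`, which is exactly the hitting hypothesis.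
As `∂ ∉ K` is absorbing, `φ₂(∂) = 0`, so restricting to `Z₁ ≠ ∂` loses nothing. -/

open Finset

theorem _root_.Finset.sum_range_pow_mul_le_mul_sum_range_pow_mul_succ {R : Type*} [CommRing R]
    [LinearOrder R] [IsStrictOrderedRing R] {r : R} {p : ℕ → R} {n : ℕ} (h : p 0 ≤ r ^ n * p n) :
    ∑ k ∈ range n, r ^ k * p k ≤ r * ∑ k ∈ range n, r ^ k * p (k + 1) := by
  have hlast := sum_range_succ (fun k => r ^ k * p k) n
  have hfirst := sum_range_succ' (fun k => r ^ k * p k) n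
  simp only [pow_succ', mul_assoc, ← mul_sum, pow_zero, one_mul] at hfirst ⊢
  linarith

theorem _root_.Finset.one_le_sum_range_pow {R : Type*} [CommSemiring R] [PartialOrder R]
    [IsOrderedRing R] {r : R} (hr : 0 ≤ r) {n : ℕ} (hn : 1 ≤ n) :
    1 ≤ ∑ k ∈ range n, r ^ k := by
  simpa using single_le_sum (fun k _ => pow_nonneg hr k) (mem_range.2 hn)

theorem _root_.ENNReal.ofReal_sum_mul_toReal {ι : Type*} (s : Finset ι) {c : ι → ℝ}
    (hc : ∀ i, 0 ≤ c i) {m : ι → ℝ≥0∞} (hm : ∀ i, m i ≠ ∞) :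
    ENNReal.ofReal (∑ i ∈ s, c i * (m i).toReal) = ∑ i ∈ s, ENNReal.ofReal (c i) * m i := by
  rw [ENNReal.ofReal_sum_of_nonneg fun i _ => mul_nonneg (hc i) ENNReal.toReal_nonneg]
  refine sum_congr rfl fun i _ => ?_
  rw [ENNReal.ofReal_mul (hc i), ENNReal.ofReal_toReal (hm i)]

section Kernel

variable [MeasurableSpace α] (step : Kernel α α)

theorem lawn_eq_pow (n : ℕ) (x : α) : lawn step n x = (step ^ n) x := by
  induction n with
  | zero => rfl
  | succ n ih => rw [lawn, ih, pow_succ']; rfl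

instance isMarkovKernel_pow [IsMarkovKernel step] (n : ℕ) : IsMarkovKernel (step ^ n) := by
  induction n with
  | zero => exact inferInstanceAs (IsMarkovKernel Kernel.id)
  | succ n ih => rw [pow_succ']; exact Kernel.IsMarkovKernel.comp step (step ^ n)

instance [IsMarkovKernel step] (n : ℕ) (x : α) : IsProbabilityMeasure (lawn step n x) := by
  rw [lawn_eq_pow]; infer_instance

theorem lawn_succ_apply (n : ℕ) (z : α) {s : Set α} (hs : MeasurableSet s) :
    lawn step (n + 1) z s = ∫⁻ y, lawn step n y s ∂step z := by
  simp_rw [lawn_eq_pow]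
  rw [add_comm, Kernel.pow_add_apply_eq_lintegral _ _ _ _ hs, pow_one]

theorem measurable_lawn_apply (n : ℕ) {s : Set α} (hs : MeasurableSet s) :
    Measurable fun y => lawn step n y s := by
  simp_rw [lawn_eq_pow]
  exact Kernel.measurable_coe _ hs

theorem lawn_of_absorbing {dead : α} (habs : step dead = Measure.dirac dead) (n : ℕ) :
    lawn step n dead = Measure.dirac dead := by
  induction n with
  | zero => rfl
  | succ n ih => rw [lawn, ih, Measure.dirac_bind (Kernel.measurable step), habs]

end Kernel

section Phi2

variable [MeasurableSpace α] (step : Kernel α α) (K : Set α) (θ : ℝ) (n : ℕ)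

noncomputable def phi2 (z : α) : ℝ :=
  (∑ k ∈ range n, θ⁻¹ ^ k)⁻¹ *
    ∑ k ∈ range n, θ⁻¹ ^ k * (lawn step k z K).toReal

variable {step K θ n}

theorem phi2_le_one [IsMarkovKernel step] (hθ : 0 ≤ θ) (z : α) : phi2 step K θ n z ≤ 1 := by
  refine inv_mul_le_one_of_le₀ (sum_le_sum fun k _ => ?_) (by positivity)
  exact mul_le_of_le_one_right (by positivity) measureReal_le_one

theorem inv_sum_le_phi2 (hθ : 0 ≤ θ) (hn : 1 ≤ n) {z : α} (hz : z ∈ K) :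
    (∑ k ∈ range n, θ⁻¹ ^ k)⁻¹ ≤ phi2 step K θ n z := by
  refine le_mul_of_one_le_right (by positivity) ?_
  calc 1 = θ⁻¹ ^ 0 * (lawn step 0 z K).toReal := by simp [lawn, hz]
    _ ≤ _ := single_le_sum (f := fun k => θ⁻¹ ^ k * (lawn step k z K).toReal)
      (fun k _ => by positivity) (mem_range.2 hn)

theorem phi2_of_absorbing {dead : α} (habs : step dead = Measure.dirac dead)
    (hK : MeasurableSet K) (hdead : dead ∉ K) : phi2 step K θ n dead = 0 := by
  simp [phi2, lawn_of_absorbing step habs, Measure.dirac_apply' _ hK, hdead]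

theorem lintegral_ofReal_phi2 [IsMarkovKernel step] (hθ : 0 ≤ θ) (hK : MeasurableSet K)
    (z : α) :
    ∫⁻ y, ENNReal.ofReal (phi2 step K θ n y) ∂step z =
      ENNReal.ofReal ((∑ k ∈ range n, θ⁻¹ ^ k)⁻¹ *
        ∑ k ∈ range n, θ⁻¹ ^ k * (lawn step (k + 1) z K).toReal) := by
  have hS : 0 ≤ (∑ k ∈ range n, θ⁻¹ ^ k)⁻¹ := by positivity
  have hsum (m : ℕ → ℝ≥0∞) (hm : ∀ k, m k ≠ ∞) :
      ENNReal.ofReal (∑ k ∈ range n, θ⁻¹ ^ k * (m k).toReal) =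
        ∑ k ∈ range n, ENNReal.ofReal (θ⁻¹ ^ k) * m k :=
    ENNReal.ofReal_sum_mul_toReal _ (fun k => by positivity) hm
  simp only [phi2, ENNReal.ofReal_mul hS]
  rw [lintegral_const_mul' _ _ ENNReal.ofReal_ne_top,
    lintegral_congr fun y => hsum (fun k => lawn step k y K) fun _ => measure_ne_top _ _,
    hsum (fun k => lawn step (k + 1) z K) fun _ => measure_ne_top _ _,
    lintegral_finsetSum _ fun k _ => (measurable_lawn_apply step k hK).const_mul _]
  simp_rw [lintegral_const_mul' _ _ ENNReal.ofReal_ne_top, lawn_succ_apply step _ z hK]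

theorem lawn_zero_le_inv_pow_mul_lawn [IsMarkovKernel step] (hθ : 0 < θ) (hK : MeasurableSet K)
    (hhit : ∀ z ∈ K, ENNReal.ofReal (θ ^ n) ≤ lawn step n z K) (z : α) :
    (lawn step 0 z K).toReal ≤ θ⁻¹ ^ n * (lawn step n z K).toReal := by
  by_cases hz : z ∈ K
  · have hθn : θ ^ n ≤ (lawn step n z K).toReal :=
      (ENNReal.ofReal_le_iff_le_toReal (measure_ne_top _ _)).1 (hhit z hz)
    rw [inv_pow, ← div_eq_inv_mul, le_div_iff₀ (by positivity)]
    simpa [lawn, hz] using hθn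
  · simp only [lawn, Measure.dirac_apply' _ hK, Set.indicator_of_notMem hz, ENNReal.toReal_zero]
    positivity

theorem mul_phi2_le (hθ : 0 < θ)
    {z : α} (hinit : (lawn step 0 z K).toReal ≤ θ⁻¹ ^ n * (lawn step n z K).toReal) :
    θ * phi2 step K θ n z ≤ (∑ k ∈ range n, θ⁻¹ ^ k)⁻¹ *
      ∑ k ∈ range n, θ⁻¹ ^ k * (lawn step (k + 1) z K).toReal := by
  have hshift := sum_range_pow_mul_le_mul_sum_range_pow_mul_succ
    (p := fun k => (lawn step k z K).toReal) hinit
  unfold phi2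
  calc θ * ((∑ k ∈ range n, θ⁻¹ ^ k)⁻¹ * ∑ k ∈ range n, θ⁻¹ ^ k * (lawn step k z K).toReal)
      = (∑ k ∈ range n, θ⁻¹ ^ k)⁻¹ * (θ * ∑ k ∈ range n, θ⁻¹ ^ k * (lawn step k z K).toReal) := by
        ring
    _ ≤ (∑ k ∈ range n, θ⁻¹ ^ k)⁻¹ *
        (θ * (θ⁻¹ * ∑ k ∈ range n, θ⁻¹ ^ k * (lawn step (k + 1) z K).toReal)) := by
        gcongr
    _ = _ := by rw [mul_inv_cancel_left₀ hθ.ne']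

theorem ofReal_mul_phi2_le_setLIntegral [IsMarkovKernel step] {dead : α}
    (habs : step dead = Measure.dirac dead) (hK : MeasurableSet K) (hdead : dead ∉ K)
    (hθ : 0 < θ) (hhit : ∀ z ∈ K, ENNReal.ofReal (θ ^ n) ≤ lawn step n z K) (z : α) :
    ENNReal.ofReal (θ * phi2 step K θ n z) ≤
      ∫⁻ y in {x | x ≠ dead}, ENNReal.ofReal (phi2 step K θ n y) ∂step z := by
  have hsupp : (fun y => ENNReal.ofReal (phi2 step K θ n y)).support ⊆ {x | x ≠ dead} := by
    rintro y hy rfl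
    simp [phi2_of_absorbing habs hK hdead] at hy
  rw [setLIntegral_eq_of_support_subset hsupp, lintegral_ofReal_phi2 hθ.le hK]
  exact ENNReal.ofReal_le_ofReal (mul_phi2_le hθ (lawn_zero_le_inv_pow_mul_lawn hθ hK hhit z))

end Phi2

theorem phi2_properties_general
    [MeasurableSpace α] (step : Kernel α α) [IsMarkovKernel step] (dead : α)
    (habs : step dead = Measure.dirac dead)
    (K : Set α) (hKmeas : MeasurableSet K) (hKE : dead ∉ K)
    (θ₂ : ℝ) (hθ₂0 : 0 < θ₂) (n : ℕ) (hn : 1 ≤ n)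
    (hhit : ∀ z ∈ K, ENNReal.ofReal (θ₂ ^ n) ≤ lawn step n z K) :
    ∀ φ₂ : α → ℝ,
      φ₂ = (fun z => (∑ k ∈ Finset.range n, θ₂⁻¹ ^ k)⁻¹ *
        ∑ k ∈ Finset.range n, θ₂⁻¹ ^ k * (lawn step k z K).toReal) →
      (∃ ε : ℝ, 0 < ε ∧ ∀ z ∈ K, ε ≤ φ₂ z) ∧
      (∀ z : α, φ₂ z ≤ 1) ∧
      ∀ z : α, z ≠ dead →
        ENNReal.ofReal (θ₂ * φ₂ z) ≤
          ∫⁻ y in {x : α | x ≠ dead}, ENNReal.ofReal (φ₂ y) ∂(step z) := by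
  rintro φ₂ rfl
  have hS : 0 < ∑ k ∈ Finset.range n, θ₂⁻¹ ^ k :=
    one_pos.trans_le (one_le_sum_range_pow (inv_nonneg.2 hθ₂0.le) hn)
  refine ⟨⟨_, inv_pos.2 hS, fun z hz => inv_sum_le_phi2 hθ₂0.le hn hz⟩,
    phi2_le_one hθ₂0.le, fun z _ => ?_⟩
  exact ofReal_mul_phi2_le_setLIntegral habs hKmeas hKE hθ₂0 hhit z

/-- **Step 2 of the proof of Proposition (E2') ⇒ (E2).** If `θ₂^{-n} ℙ_z(Z_n ∈ K) ≥ 1` on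
`K` for some `n ≥ 1`, then
`φ₂(z) = (∑_{k<n} θ₂^{-k})^{-1} ∑_{k<n} θ₂^{-k} ℙ_z(Z_k ∈ K)` satisfies `inf_K φ₂ > 0`,
`sup_E φ₂ ≤ 1` and `E_z(φ₂(Z₁) 1_{Z₁ ≠ ∂}) ≥ θ₂ φ₂(z)` for all `z ∈ E`. -/
theorem phi2_properties
    [MeasurableSpace α] (step : Kernel α α) [IsMarkovKernel step] (dead : α)
    (habs : step dead = Measure.dirac dead)
    (K : Set α) (hKmeas : MeasurableSet K) (hKE : dead ∉ K)
    (θ₂ : ℝ) (hθ₂0 : 0 < θ₂) (hθ₂1 : θ₂ < 1) (n : ℕ) (hn : 1 ≤ n)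
    (hhit : ∀ z ∈ K, ENNReal.ofReal (θ₂ ^ n) ≤ lawn step n z K) :
    ∀ φ₂ : α → ℝ,
      φ₂ = (fun z => (∑ k ∈ Finset.range n, θ₂⁻¹ ^ k)⁻¹ *
        ∑ k ∈ Finset.range n, θ₂⁻¹ ^ k * (lawn step k z K).toReal) →
      (∃ ε : ℝ, 0 < ε ∧ ∀ z ∈ K, ε ≤ φ₂ z) ∧
      (∀ z : α, φ₂ z ≤ 1) ∧
      ∀ z : α, z ≠ dead →
        ENNReal.ofReal (θ₂ * φ₂ z) ≤
          ∫⁻ y in {x : α | x ≠ dead}, ENNReal.ofReal (φ₂ y) ∂(step z) :=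
  phi2_properties_general step dead habs K hKmeas hKE θ₂ hθ₂0 n hn hhit

end MChain
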